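/- arXiv:1802.06422 — 2 statements merged into one kernel-verified Lean document; each statement's English description precedes it below -/
import Mathlib

section
/- The enstrophy S(φ) = (1/2) Σ_{0<|k|≤N} |k|⁴ |φ_k|² is a first integral of the truncated 2D Euler equation dφ_k/dt = B_k^N(φ): Σ_k B_k^N(φ) ∂S/∂φ_k = 0 for all φ, under the same symmetric truncation hypothesis. -/
/-!
Expanding `B_k^N`, the enstrophy flux `∑_k |k|⁴ φ_{-k} B_k^N(φ)` becomes `4π²` times a sum over
triads `(k, h, k - h)` of `|k|² (k^⊥·h) |k - h|² φ_{-k} φ_h φ_{k-h}`. The involution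
`(k, h) ↦ (h - k, h)` of the set of triads permutes the three factors `φ` and reverses the sign of
the coefficient, so the terms cancel in pairs.
-/

/-- The truncated 2D Euler vector field on complex Fourier coefficients. -/
noncomputable def BeulerC (S : Finset (ℤ × ℤ)) (k : ℤ × ℤ) (φ : ℤ × ℤ → ℂ) : ℂ :=
  ((4 * Real.pi ^ 2 / ((k.1 : ℝ) ^ 2 + (k.2 : ℝ) ^ 2) : ℝ) : ℂ) *
    ∑ h ∈ S.filter (fun h => h ≠ k ∧ k - h ∈ S),
      ((k.1 * h.2 - k.2 * h.1 : ℤ) : ℂ) *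
        (((k.1 - h.1) ^ 2 + (k.2 - h.2) ^ 2 : ℤ) : ℂ) * φ h * φ (k - h)

open Finset

section Triads

variable {G M : Type*} [AddCommGroup G] [DecidableEq G] [AddCommGroup M] [IsAddTorsionFree M]

theorem sum_triads_eq_zero_of_antisymm (S : Finset G) (h0 : 0 ∉ S) (hsym : ∀ k ∈ S, -k ∈ S)
    (T : G → G → M) (hT : ∀ k h, T (h - k) h = -T k h) :
    ∑ k ∈ S, ∑ h ∈ S.filter (fun h => h ≠ k ∧ k - h ∈ S), T k h = 0 := by
  rw [sum_sigma']
  refine sum_involution (fun p _ => ⟨p.2 - p.1, p.2⟩) (fun p _ => by simp [hT])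
    (fun ⟨k, h⟩ _ hne heq => hne ?_) (fun ⟨k, h⟩ hp => ?_) (fun p _ => by simp)
  · -- at a fixed point `h = 2k` antisymmetry gives `2 • T k h = 0`
    have hh : h - k = k := congrArg Sigma.fst heq
    have hT' := hT k h
    rw [hh, eq_neg_iff_add_eq_zero, ← two_nsmul, two_nsmul_eq_zero] at hT'
    exact hT'
  · simp only [mem_sigma, mem_filter] at hp ⊢
    obtain ⟨hkS, hhS, -, hkh⟩ := hp
    refine ⟨by simpa using hsym _ hkh, hhS, fun e => h0 ?_, by simpa using hsym _ hkS⟩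
    rwa [← sub_eq_self.mp e.symm]

end Triads

def enstrophyCoeff (k h : ℤ × ℤ) : ℤ :=
  (k.1 ^ 2 + k.2 ^ 2) * (k.1 * h.2 - k.2 * h.1) * ((k.1 - h.1) ^ 2 + (k.2 - h.2) ^ 2)

theorem enstrophyCoeff_sub_left (k h : ℤ × ℤ) :
    enstrophyCoeff (h - k) h = -enstrophyCoeff k h := by
  simp only [enstrophyCoeff, Prod.fst_sub, Prod.snd_sub]
  ring

theorem normSq_ne_zero_of_ne_zero {k : ℤ × ℤ} (hk : k ≠ 0) : k.1 ^ 2 + k.2 ^ 2 ≠ 0 := by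
  contrapose! hk
  ext <;> simp only [Prod.fst_zero, Prod.snd_zero] <;> nlinarith [sq_nonneg k.1, sq_nonneg k.2]

theorem normSq_sq_mul_BeulerC (S : Finset (ℤ × ℤ)) {k : ℤ × ℤ} (hk : k ≠ 0) (φ : ℤ × ℤ → ℂ) :
    (((k.1 ^ 2 + k.2 ^ 2) ^ 2 : ℤ) : ℂ) * φ (-k) * BeulerC S k φ =
      ((4 * Real.pi ^ 2 : ℝ) : ℂ) * ∑ h ∈ S.filter (fun h => h ≠ k ∧ k - h ∈ S),
        (enstrophyCoeff k h : ℂ) * (φ (-k) * φ h * φ (k - h)) := by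
  have hk' : ((k.1 : ℂ) ^ 2 + (k.2 : ℂ) ^ 2) ≠ 0 := by exact_mod_cast normSq_ne_zero_of_ne_zero hk
  rw [BeulerC, mul_sum, mul_sum, mul_sum]
  refine sum_congr rfl fun h _ => ?_
  simp only [enstrophyCoeff]
  push_cast
  field_simp

theorem stmt7_general (S : Finset (ℤ × ℤ)) (h0 : ((0 : ℤ), (0 : ℤ)) ∉ S)
    (hsym : ∀ k ∈ S, -k ∈ S) (φ : ℤ × ℤ → ℂ) :
    ∑ k ∈ S, (((k.1 ^ 2 + k.2 ^ 2) ^ 2 : ℤ) : ℂ) * φ (-k) * BeulerC S k φ = 0 := by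
  have h0' : (0 : ℤ × ℤ) ∉ S := h0
  rw [sum_congr rfl fun k hk => normSq_sq_mul_BeulerC S (ne_of_mem_of_not_mem hk h0') φ,
    ← mul_sum, sum_triads_eq_zero_of_antisymm S h0' hsym, mul_zero]
  intro k h
  rw [enstrophyCoeff_sub_left, neg_sub, sub_sub_cancel_left, Int.cast_neg]
  ring

/-- the enstrophy `S(φ) = ½ ∑_k |k|⁴ |φ_k|²` is a first integral of the
truncated 2D Euler equation: since `∂S/∂φ_k = |k|⁴ φ_{−k}`, the claim is
`∑_k |k|⁴ φ_{−k} B_k^N(φ) = 0`, under the same symmetric truncation hypothesis. -/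
theorem stmt7 (S : Finset (ℤ × ℤ)) (h0 : ((0 : ℤ), (0 : ℤ)) ∉ S)
    (hsym : ∀ k ∈ S, -k ∈ S) (φ : ℤ × ℤ → ℂ)
    (hreal : ∀ k, φ (-k) = starRingEnd ℂ (φ k)) :
    ∑ k ∈ S, (((k.1 ^ 2 + k.2 ^ 2) ^ 2 : ℤ) : ℂ) * φ (-k) * BeulerC S k φ = 0 :=
  stmt7_general S h0 hsym φ
end

section
/- Suppose R_ε : ℝ^M → ℝ are continuous functions converging locally uniformly to R as ε → 0⁺, and each R_ε satisfies Σ_k B_k(x) ∂R_ε/∂x_k − ε Δ R_ε = 0 classically (R_ε ∈ C²), with B continuous. Then R is a viscosity solution of Σ_k B_k(x) ∂R/∂x_k = 0: for every C^∞ function g, if R − g has a strict local maximum at x₀ then Σ_k B_k(x₀) ∂g/∂x_k(x₀) ≤ 0, and if a strict local minimum then Σ_k B_k(x₀) ∂g/∂x_k(x₀) ≥ 0. -/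
open Filter Topology

/-- Partial derivative in the `k`-th coordinate direction on `ℝ^M`. -/
noncomputable def pd {M : ℕ} (k : Fin M) (f : (Fin M → ℝ) → ℝ) (x : Fin M → ℝ) : ℝ :=
  fderiv ℝ f x (Pi.single k 1)

lemma contDiff_pd {M : ℕ} {f : (Fin M → ℝ) → ℝ} {n : ℕ∞} (hf : ContDiff ℝ (n + 1) f)
    (k : Fin M) : ContDiff ℝ n (pd k f) :=
  (ContinuousLinearMap.apply ℝ ℝ ((Pi.single k 1 : Fin M → ℝ))).contDiff.comp
    (hf.fderiv_right le_rfl)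

lemma pd_sub {M : ℕ} {f g : (Fin M → ℝ) → ℝ} (hf : Differentiable ℝ f)
    (hg : Differentiable ℝ g) (k : Fin M) (x : Fin M → ℝ) :
    pd k (fun y => f y - g y) x = pd k f x - pd k g x := by
  simp [pd, fderiv_fun_sub (hf x) (hg x)]

lemma pd_neg {M : ℕ} {f : (Fin M → ℝ) → ℝ} (k : Fin M) (x : Fin M → ℝ) :
    pd k (fun y => -f y) x = -pd k f x := by
  simp [pd, fderiv_neg]

/-- 1D second-derivative necessary condition at a local maximum. -/
lemma secondDeriv_nonpos_of_isLocalMax {φ : ℝ → ℝ} (hφ : ContDiff ℝ 2 φ)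
    (h : IsLocalMax φ 0) : deriv (deriv φ) 0 ≤ 0 := by
  by_contra hc
  push_neg at hc
  set ψ := deriv φ with hψ
  have h1 : ContDiff ℝ 1 ψ := by simpa using hφ.iterate_deriv' 1 1
  have hψ0 : ψ 0 = 0 := h.deriv_eq_zero
  have hψd : HasDerivAt ψ (deriv ψ 0) 0 := ((h1.differentiable one_ne_zero) 0).hasDerivAt
  have hslope : Tendsto (fun t : ℝ => ψ t / t) (𝓝[≠] 0) (𝓝 (deriv ψ 0)) := by
    have := hasDerivAt_iff_tendsto_slope.mp hψd
    refine this.congr' ?_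
    filter_upwards [self_mem_nhdsWithin] with t ht
    simp [slope, hψ0, div_eq_inv_mul]
  have hpos : ∀ᶠ t in 𝓝[>] (0:ℝ), ψ t > 0 := by
    have h2 : ∀ᶠ t in 𝓝[≠] (0:ℝ), ψ t / t > 0 :=
      hslope.eventually (eventually_gt_nhds hc)
    have h3 : ∀ᶠ t in 𝓝[>] (0:ℝ), ψ t / t > 0 :=
      h2.filter_mono (nhdsWithin_mono _ fun t ht => ne_of_gt ht)
    filter_upwards [h3, self_mem_nhdsWithin] with t ht ht'
    have := mul_pos ht (show (0:ℝ) < t from ht')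
    simpa [div_mul_cancel₀, ne_of_gt (show (0:ℝ) < t from ht')] using this
  obtain ⟨δ, hδ, hδpos⟩ := (mem_nhdsGT_iff_exists_Ioo_subset).mp hpos
  have hmono : StrictMonoOn φ (Set.Icc 0 δ) := by
    refine strictMonoOn_of_deriv_pos (convex_Icc 0 δ) (hφ.continuous.continuousOn) ?_
    intro t ht
    rw [interior_Icc] at ht
    exact hδpos ht
  obtain ⟨η, hη, hmax⟩ := Metric.eventually_nhds_iff.mp h
  have hδ0 : (0:ℝ) < δ := hδ
  set t := min δ η / 2 with htdef
  have ht0 : 0 < t := by positivity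
  have htδ : t ≤ δ := by
    calc t ≤ δ / 2 := by
          apply div_le_div_of_nonneg_right (min_le_left _ _)
          norm_num
      _ ≤ δ := by linarith
  have htη : t < η := by
    calc t ≤ η / 2 := by
          apply div_le_div_of_nonneg_right (min_le_right _ _)
          norm_num
      _ < η := by linarith
  have hlt : φ 0 < φ t := hmono (Set.mem_Icc.2 ⟨le_rfl, hδ0.le⟩)
    (Set.mem_Icc.2 ⟨ht0.le, htδ⟩) ht0
  have hle : φ t ≤ φ 0 := hmax (by simpa [Real.dist_eq, abs_of_pos ht0] using htη)
  linarith

/-- Multidimensional: each pure second partial is nonpositive at a local maximum. -/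
lemma pd2_nonpos_of_isLocalMax {M : ℕ} {f : (Fin M → ℝ) → ℝ} (hf : ContDiff ℝ 2 f)
    {x : Fin M → ℝ} (h : IsLocalMax f x) (k : Fin M) : pd k (pd k f) x ≤ 0 := by
  set e : Fin M → ℝ := Pi.single k 1 with he
  set L : ℝ → (Fin M → ℝ) := fun t => x + t • e with hL
  have hL0 : L 0 = x := by simp [hL]
  have hLc : ContDiff ℝ (⊤ : ℕ∞) L := contDiff_const.add (contDiff_id.smul contDiff_const)
  have hLd : ∀ t, HasDerivAt L e t := by
    intro t
    have := ((hasDerivAt_id t).smul_const e).const_add x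
    rw [one_smul] at this
    exact this
  set φ : ℝ → ℝ := f ∘ L with hφdef
  have hφ : ContDiff ℝ 2 φ := hf.comp (hLc.of_le (WithTop.coe_le_coe.mpr le_top))
  have hmax : IsLocalMax φ 0 := by
    have hT : Tendsto L (𝓝 0) (𝓝 x) := by
      rw [← hL0]; exact (hLc.continuous.tendsto 0)
    have h2 := hT.eventually h
    refine h2.mono fun t ht => ?_
    simpa [hφdef, hL0] using ht
  have hpd1 : ContDiff ℝ 1 (pd k f) := contDiff_pd (by norm_num at hf ⊢; exact hf) k
  have hd1 : deriv φ = fun t => pd k f (L t) := by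
    funext t
    have hfd : HasFDerivAt f (fderiv ℝ f (L t)) (L t) :=
      ((hf.differentiable (by norm_num)) (L t)).hasFDerivAt
    exact (hfd.comp_hasDerivAt t (hLd t)).deriv
  have hd2 : deriv (deriv φ) 0 = pd k (pd k f) x := by
    rw [hd1]
    have hfd : HasFDerivAt (pd k f) (fderiv ℝ (pd k f) x) x :=
      ((hpd1.differentiable one_ne_zero) x).hasFDerivAt
    rw [← hL0] at hfd
    have := (hfd.comp_hasDerivAt (0:ℝ) (hLd 0)).deriv
    simpa [pd, hL0, Function.comp_def] using this
  have := secondDeriv_nonpos_of_isLocalMax hφ hmax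
  rwa [hd2] at this

/-- Negation preserves locally uniform convergence. -/
lemma tlu_neg {α : Type*} [TopologicalSpace α] {F : ℝ → α → ℝ} {f : α → ℝ} {p : Filter ℝ}
    (h : TendstoLocallyUniformly F f p) :
    TendstoLocallyUniformly (fun n x => -(F n x)) (fun x => -f x) p := by
  rw [Metric.tendstoLocallyUniformly_iff] at h ⊢
  intro ε hε x
  obtain ⟨t, ht, h'⟩ := h ε hε x
  exact ⟨t, ht, h'.mono fun n hn y hy => by simpa [dist_neg_neg] using hn y hy⟩

/-- The maximum half of the vanishing-viscosity theorem. -/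
lemma mainMax {M : ℕ} (B : Fin M → (Fin M → ℝ) → ℝ) (hB : ∀ k, Continuous (B k))
    (Rε : ℝ → (Fin M → ℝ) → ℝ) (R : (Fin M → ℝ) → ℝ)
    (hC2 : ∀ ε > (0 : ℝ), ContDiff ℝ 2 (Rε ε))
    (hpde : ∀ ε > (0 : ℝ), ∀ x, ∑ k, B k x * pd k (Rε ε) x
        - ε * ∑ k, pd k (pd k (Rε ε)) x = 0)
    (hconv : TendstoLocallyUniformly Rε R (𝓝[>] (0 : ℝ)))
    (g : (Fin M → ℝ) → ℝ) (hg : ContDiff ℝ (⊤ : ℕ∞) g) (x₀ : Fin M → ℝ)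
    (hmax : ∀ᶠ x in 𝓝[≠] x₀, R x - g x < R x₀ - g x₀) :
    ∑ k, B k x₀ * pd k g x₀ ≤ 0 := by
  have hgC2 : ContDiff ℝ 2 g := hg.of_le (WithTop.coe_le_coe.mpr le_top)
  have hRcont : Continuous R := by
    refine hconv.continuous ?_
    apply Eventually.frequently
    filter_upwards [self_mem_nhdsWithin] with ε hε
    exact (hC2 ε hε).continuous
  rw [eventually_nhdsWithin_iff] at hmax
  obtain ⟨η, hη, hball⟩ := Metric.eventually_nhds_iff.mp hmax
  set r := η / 2 with hrdef
  have hr : 0 < r := by positivity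
  have hstrict : ∀ x ∈ Metric.closedBall x₀ r, x ≠ x₀ → R x - g x < R x₀ - g x₀ := by
    intro x hx hne
    exact hball (lt_of_le_of_lt (Metric.mem_closedBall.mp hx) (by linarith)) hne
  set K := Metric.closedBall x₀ r with hKdef
  have hK : IsCompact K := isCompact_closedBall x₀ r
  have hx₀K : x₀ ∈ K := Metric.mem_closedBall_self hr.le
  have hunif : TendstoUniformlyOn Rε R (𝓝[>] (0:ℝ)) K :=
    (tendstoLocallyUniformlyOn_iff_tendstoUniformlyOn_of_compact hK).mp
      ((tendstoLocallyUniformlyOn_univ.mpr hconv).mono (Set.subset_univ K))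
  have hy : ∀ ε > (0:ℝ), ∃ z ∈ K, IsMaxOn (fun x => Rε ε x - g x) K z := by
    intro ε hε
    exact hK.exists_isMaxOn ⟨x₀, hx₀K⟩
      ((hC2 ε hε).continuous.sub hg.continuous).continuousOn
  choose! y hyK hymax using hy
  have hytend : Tendsto y (𝓝[>] (0:ℝ)) (𝓝 x₀) := by
    rw [Metric.tendsto_nhds]
    intro δ hδ
    set δ' := min δ r with hδ'def
    have hδ' : 0 < δ' := lt_min hδ hr
    set A := K \ Metric.ball x₀ δ' with hAdef
    by_cases hAne : A.Nonempty
    · have hAcomp : IsCompact A := hK.diff Metric.isOpen_ball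
      obtain ⟨z, hzA, hzmax⟩ := hAcomp.exists_isMaxOn hAne
        (hRcont.sub hg.continuous).continuousOn
      have hzne : z ≠ x₀ := by
        intro hzx
        have := hzA.2
        simp [hzx, Metric.mem_ball, hδ'] at this
      have hm : R z - g z < R x₀ - g x₀ := hstrict z hzA.1 hzne
      set cc := R x₀ - g x₀ with hccdef
      set m := R z - g z with hmdef
      set η' := (cc - m) / 3 with hη'def
      have hη' : 0 < η' := by simp [hη'def]; linarith
      have hU := (Metric.tendstoUniformlyOn_iff.mp hunif) η' hη'
      filter_upwards [hU, self_mem_nhdsWithin] with ε hUε hε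
      by_contra hcon
      push_neg at hcon
      have hyA : y ε ∈ A := by
        refine ⟨hyK ε hε, fun hb => ?_⟩
        exact absurd (Metric.mem_ball.mp hb)
          (not_lt.mpr (le_trans (min_le_left δ r) hcon))
      have h1 : Rε ε x₀ - g x₀ ≤ Rε ε (y ε) - g (y ε) := hymax ε hε hx₀K
      have h2 : R (y ε) - g (y ε) ≤ m := hzmax hyA
      have h3 : dist (R (y ε)) (Rε ε (y ε)) < η' := hUε (y ε) (hyK ε hε)
      have h4 : dist (R x₀) (Rε ε x₀) < η' := hUε x₀ hx₀K
      rw [Real.dist_eq, abs_lt] at h3 h4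
      simp only [hccdef] at hm
      linarith [h1, h2, h3.1, h3.2, h4.1, h4.2]
    · filter_upwards [self_mem_nhdsWithin] with ε hε
      have : y ε ∈ Metric.ball x₀ δ' := by
        by_contra hc
        exact hAne ⟨y ε, hyK ε hε, hc⟩
      exact lt_of_lt_of_le (Metric.mem_ball.mp this) (min_le_left _ _)
  have hloc : ∀ᶠ ε in 𝓝[>] (0:ℝ), IsLocalMax (fun x => Rε ε x - g x) (y ε) := by
    have hnear := (Metric.tendsto_nhds.mp hytend) r hr
    filter_upwards [hnear, self_mem_nhdsWithin] with ε hd hε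
    have hKnhds : K ∈ 𝓝 (y ε) :=
      mem_of_superset (Metric.ball_mem_nhds _ (by linarith : (0:ℝ) < r - dist (y ε) x₀)) ?_
    · exact (hymax ε hε).isLocalMax hKnhds
    · intro w hw
      have := Metric.mem_ball.mp hw
      rw [Metric.mem_closedBall]
      calc dist w x₀ ≤ dist w (y ε) + dist (y ε) x₀ := dist_triangle _ _ _
        _ ≤ (r - dist (y ε) x₀) + dist (y ε) x₀ := by linarith
        _ = r := by ring
  have hkey : ∀ᶠ ε in 𝓝[>] (0:ℝ),
      ∑ k, B k (y ε) * pd k g (y ε) ≤ ε * ∑ k, pd k (pd k g) (y ε) := by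
    filter_upwards [hloc, self_mem_nhdsWithin] with ε hl hε
    set f := Rε ε with hfdef
    have hf2 : ContDiff ℝ 2 f := hC2 ε hε
    have hfd : Differentiable ℝ f := hf2.differentiable (by norm_num)
    have hgd : Differentiable ℝ g := hgC2.differentiable (by norm_num)
    have hF2 : ContDiff ℝ 2 (fun x => f x - g x) := hf2.sub hgC2
    have hgrad : ∀ k, pd k f (y ε) = pd k g (y ε) := by
      intro k
      have h0 : fderiv ℝ (fun x => f x - g x) (y ε) = 0 := hl.fderiv_eq_zero
      have := pd_sub hfd hgd k (y ε)
      rw [pd] at this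
      rw [h0] at this
      simp at this
      linarith
    have hpdfd : ∀ k : Fin M, Differentiable ℝ (pd k f) := fun k =>
      (contDiff_pd (n := 1) (by norm_num at hf2 ⊢; exact hf2) k).differentiable (by norm_num)
    have hpdgd : ∀ k : Fin M, Differentiable ℝ (pd k g) := fun k =>
      (contDiff_pd (n := 1) (by norm_num at hgC2 ⊢; exact hgC2) k).differentiable (by norm_num)
    have hsec : ∀ k : Fin M, pd k (pd k f) (y ε) ≤ pd k (pd k g) (y ε) := by
      intro k
      have h0 : pd k (pd k (fun x => f x - g x)) (y ε) ≤ 0 :=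
        pd2_nonpos_of_isLocalMax hF2 hl k
      have he1 : pd k (fun x => f x - g x) = fun x => pd k f x - pd k g x :=
        funext fun x => pd_sub hfd hgd k x
      rw [he1, pd_sub (hpdfd k) (hpdgd k) k (y ε)] at h0
      linarith
    have hp := hpde ε hε (y ε)
    have he2 : ∑ k, B k (y ε) * pd k f (y ε) = ∑ k, B k (y ε) * pd k g (y ε) :=
      Finset.sum_congr rfl fun k _ => by rw [hgrad k]
    have he3 : ε * ∑ k, pd k (pd k f) (y ε) ≤ ε * ∑ k, pd k (pd k g) (y ε) := by
      apply mul_le_mul_of_nonneg_left _ hε.le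
      exact Finset.sum_le_sum fun k _ => hsec k
    calc ∑ k, B k (y ε) * pd k g (y ε) = ∑ k, B k (y ε) * pd k f (y ε) := he2.symm
      _ = ε * ∑ k, pd k (pd k f) (y ε) := by linarith
      _ ≤ ε * ∑ k, pd k (pd k g) (y ε) := he3
  have hpdg1 : ∀ k : Fin M, ContDiff ℝ (1:ℕ∞) (pd k g) := fun k =>
    contDiff_pd (n := 1) (by norm_num at hgC2 ⊢; exact hgC2) k
  have hpdgc : ∀ k : Fin M, Continuous (pd k g) := fun k => (hpdg1 k).continuous
  have hpd2gc : ∀ k : Fin M, Continuous (pd k (pd k g)) := fun k =>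
    (contDiff_pd (n := 0) (by simpa using hpdg1 k) k).continuous
  have T1 : Tendsto (fun ε => ∑ k, B k (y ε) * pd k g (y ε)) (𝓝[>] (0:ℝ))
      (𝓝 (∑ k, B k x₀ * pd k g x₀)) := by
    have hc : Continuous fun z => ∑ k, B k z * pd k g z :=
      continuous_finset_sum _ fun k _ => (hB k).mul (hpdgc k)
    exact (hc.tendsto x₀).comp hytend
  have T2 : Tendsto (fun ε => ε * ∑ k, pd k (pd k g) (y ε)) (𝓝[>] (0:ℝ)) (𝓝 0) := by
    have hc : Continuous fun z => ∑ k, pd k (pd k g) z :=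
      continuous_finset_sum _ fun k _ => hpd2gc k
    have hεt : Tendsto (fun ε : ℝ => ε) (𝓝[>] (0:ℝ)) (𝓝 0) :=
      tendsto_id.mono_left nhdsWithin_le_nhds
    have := hεt.mul ((hc.tendsto x₀).comp hytend)
    simpa using this
  exact le_of_tendsto_of_tendsto T1 T2 hkey

/-- vanishing viscosity: if `R_ε ∈ C²` solve
`∑_k B_k ∂_k R_ε − ε Δ R_ε = 0` classically for all `ε > 0`, `B` is continuous, and
`R_ε → R` locally uniformly as `ε → 0⁺`, then `R` is a viscosity solution of
`∑_k B_k ∂_k R = 0`: at a strict local maximum `x₀` of `R − g` (`g` smooth),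
`∑_k B_k(x₀) ∂_k g(x₀) ≤ 0`, and at a strict local minimum, `≥ 0`. -/
theorem stmt15 {M : ℕ} (B : Fin M → (Fin M → ℝ) → ℝ) (hB : ∀ k, Continuous (B k))
    (Rε : ℝ → (Fin M → ℝ) → ℝ) (R : (Fin M → ℝ) → ℝ)
    (hC2 : ∀ ε > (0 : ℝ), ContDiff ℝ 2 (Rε ε))
    (hpde : ∀ ε > (0 : ℝ), ∀ x, ∑ k, B k x * pd k (Rε ε) x
        - ε * ∑ k, pd k (pd k (Rε ε)) x = 0)
    (hconv : TendstoLocallyUniformly Rε R (𝓝[>] (0 : ℝ))) :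
    ∀ g : (Fin M → ℝ) → ℝ, ContDiff ℝ (⊤ : ℕ∞) g → ∀ x₀ : Fin M → ℝ,
      ((∀ᶠ x in 𝓝[≠] x₀, R x - g x < R x₀ - g x₀) →
        ∑ k, B k x₀ * pd k g x₀ ≤ 0) ∧
      ((∀ᶠ x in 𝓝[≠] x₀, R x₀ - g x₀ < R x - g x) →
        0 ≤ ∑ k, B k x₀ * pd k g x₀) := by
  intro g hg x₀
  constructor
  · intro hmax
    exact mainMax B hB Rε R hC2 hpde hconv g hg x₀ hmax
  · intro hmin
    -- apply the max case to the negated functions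
    have hC2' : ∀ ε > (0 : ℝ), ContDiff ℝ 2 (fun x => -(Rε ε x)) := fun ε hε =>
      (hC2 ε hε).neg
    have hneg1 : ∀ (f : (Fin M → ℝ) → ℝ) (k : Fin M),
        pd k (fun y => -(f y)) = fun x => -(pd k f x) :=
      fun f k => funext fun x => pd_neg k x
    have hpde' : ∀ ε > (0 : ℝ), ∀ x, ∑ k, B k x * pd k (fun y => -(Rε ε y)) x
        - ε * ∑ k, pd k (pd k (fun y => -(Rε ε y))) x = 0 := by
      intro ε hε x
      have hp := hpde ε hε x
      have e1 : ∀ k : Fin M, pd k (fun y => -(Rε ε y)) x = -(pd k (Rε ε) x) :=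
        fun k => pd_neg k x
      have e2 : ∀ k : Fin M, pd k (pd k (fun y => -(Rε ε y))) x
          = -(pd k (pd k (Rε ε)) x) := by
        intro k
        rw [hneg1 (Rε ε) k]
        exact pd_neg k x
      simp only [e1, e2, Finset.sum_neg_distrib, mul_neg]
      linarith
    have hconv' : TendstoLocallyUniformly (fun ε x => -(Rε ε x)) (fun x => -R x)
        (𝓝[>] (0 : ℝ)) := tlu_neg hconv
    have hmax' : ∀ᶠ x in 𝓝[≠] x₀,
        (-R x) - (-g x) < (-R x₀) - (-g x₀) := by
      filter_upwards [hmin] with x hx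
      linarith
    have := mainMax B hB (fun ε x => -(Rε ε x)) (fun x => -R x) hC2' hpde' hconv'
      (fun x => -g x) hg.neg x₀ hmax'
    have e3 : ∀ k : Fin M, pd k (fun x => -g x) x₀ = -(pd k g x₀) := fun k => pd_neg k x₀
    simp only [e3, mul_neg, Finset.sum_neg_distrib] at this
    linarith
end
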